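/- arXiv:1401.1103 — 6 statements merged into one kernel-verified Lean document; each statement's English description precedes it below -/
import Mathlib

section
/- Let A be a Boolean algebra, V a set, and f : A → ℘(V) an injective Boolean homomorphism with f(⊤) = V such that whenever X ⊆ A has a supremum ⨆X in A, f(⨆X) = ⋃_{x∈X} f(x). Then A is atomic, and moreover ⋃_{a ∈ At A} f(a) = V. -/
/-! A complete representation `f` sends every existing supremum to a union. Fix a point `v`.
The elements `a` with `v ∈ f a` form an intersecting family. If it contained no atom, then the
elements *not* containing `v` would have supremum `⊤`: any upper bound `u ≠ ⊤` leaves a nonzero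
`uᶜ` all of whose nonzero parts contain `v`, and splitting a non-atom `uᶜ` into two disjoint
nonzero parts contradicts intersectingness. Completeness then puts `v` into some `f x` with
`v ∉ f x`. So every point lies in the image of an atom, and since `f` is injective every nonzero
`a` has a point `v ∈ f a`, whose atom `c` meets `a` and hence lies below it. -/

section BooleanAlgebra

variable {A : Type*} [BooleanAlgebra A] {S : Set A}

theorem Set.Intersecting.isAtom_of_forall_le (hS : S.Intersecting) {c : A} (hc : c ≠ ⊥)
    (hcS : ∀ b ≤ c, b ≠ ⊥ → b ∈ S) : IsAtom c := by
  refine ⟨hc, fun b hbc => by_contra fun hb => ?_⟩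
  have hcb : c \ b ≠ ⊥ := fun h => hbc.not_ge (sdiff_eq_bot_iff.1 h)
  exact hS (hcS b hbc.le hb) (hcS _ sdiff_le hcb) disjoint_sdiff_self_right

theorem Set.Intersecting.isLUB_compl_top (hS : S.Intersecting) (hatom : ∀ a ∈ S, ¬IsAtom a) :
    IsLUB Sᶜ ⊤ := by
  refine ⟨fun _ _ => le_top, fun u hu => by_contra fun hu_top => ?_⟩
  have hc : uᶜ ≠ ⊥ := fun h => hu_top (compl_eq_bot.1 h).ge
  have hcS : ∀ b ≤ uᶜ, b ≠ ⊥ → b ∈ S := fun b hb hb0 =>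
    by_contra fun hbS => hb0 (eq_bot_iff.2 ((le_inf (hu hbS) hb).trans inf_compl_eq_bot.le))
  exact hatom uᶜ (hcS _ le_rfl hc) (hS.isAtom_of_forall_le hc hcS)

end BooleanAlgebra

section Representation

variable {A V : Type*} [BooleanAlgebra A] {f : A → Set V}

theorem map_bot_eq_empty_of_isLUB (fSup : ∀ (X : Set A) (s : A), IsLUB X s → f s = ⋃ x ∈ X, f x) :
    f ⊥ = ∅ := by
  simpa using fSup ∅ ⊥ isLUB_empty

theorem intersecting_setOf_mem (finf : ∀ a b : A, f (a ⊓ b) = f a ∩ f b) (fbot : f ⊥ = ∅)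
    (v : V) : {a : A | v ∈ f a}.Intersecting := fun a ha b hb hab => by
  have hv : v ∈ f (a ⊓ b) := by rw [finf]; exact ⟨ha, hb⟩
  rw [disjoint_iff.1 hab, fbot] at hv
  exact hv

theorem exists_isAtom_mem_of_isLUB (finf : ∀ a b : A, f (a ⊓ b) = f a ∩ f b)
    (ftop : f ⊤ = Set.univ) (fSup : ∀ (X : Set A) (s : A), IsLUB X s → f s = ⋃ x ∈ X, f x)
    (v : V) : ∃ c, IsAtom c ∧ v ∈ f c := by
  by_contra! hno
  have hlub := (intersecting_setOf_mem finf (map_bot_eq_empty_of_isLUB fSup) v).isLUB_compl_top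
    fun a ha hatom => hno a hatom ha
  have hv : v ∈ f ⊤ := ftop ▸ Set.mem_univ v
  rw [fSup _ _ hlub] at hv
  obtain ⟨x, hx, hvx⟩ := Set.mem_iUnion₂.1 hv
  exact hx hvx

theorem isAtomic_of_forall_exists_isAtom_mem (finj : Function.Injective f)
    (finf : ∀ a b : A, f (a ⊓ b) = f a ∩ f b) (fbot : f ⊥ = ∅)
    (hcover : ∀ v, ∃ c, IsAtom c ∧ v ∈ f c) : IsAtomic A := by
  refine ⟨fun a => or_iff_not_imp_left.2 fun ha => ?_⟩
  obtain ⟨v, hva⟩ := Set.nonempty_iff_ne_empty.2 fun h => ha (finj (h.trans fbot.symm))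
  obtain ⟨c, hc, hvc⟩ := hcover v
  refine ⟨c, hc, hc.not_disjoint_iff_le.1 fun hdis => ?_⟩
  exact intersecting_setOf_mem finf fbot v hvc hva hdis

end Representation

theorem stmt3_general (A : Type*) [BooleanAlgebra A] (V : Type*)
    (f : A → Set V)
    (finj : Function.Injective f)
    (finf : ∀ a b : A, f (a ⊓ b) = f a ∩ f b)
    (ftop : f ⊤ = Set.univ)
    (fSup : ∀ (X : Set A) (s : A), IsLUB X s → f s = ⋃ x ∈ X, f x) :
    IsAtomic A ∧ (⋃ a ∈ {x : A | IsAtom x}, f a) = Set.univ := by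
  have hcover := exists_isAtom_mem_of_isLUB finf ftop fSup
  refine ⟨isAtomic_of_forall_exists_isAtom_mem finj finf (map_bot_eq_empty_of_isLUB fSup) hcover,
    Set.eq_univ_of_forall fun v => ?_⟩
  obtain ⟨c, hc, hvc⟩ := hcover v
  exact Set.mem_iUnion₂.2 ⟨c, hc, hvc⟩

/-- If `f : A → ℘(V)` is a complete representation of the Boolean
algebra `A` (an injective Boolean homomorphism with `f ⊤ = V` carrying all
existing suprema to unions), then `A` is atomic and the images of the atoms
cover `V`. -/
theorem stmt3 (A : Type*) [BooleanAlgebra A] (V : Type*)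
    (f : A → Set V)
    (finj : Function.Injective f)
    (fsup : ∀ a b : A, f (a ⊔ b) = f a ∪ f b)
    (finf : ∀ a b : A, f (a ⊓ b) = f a ∩ f b)
    (fcompl : ∀ a : A, f aᶜ = (f a)ᶜ)
    (ftop : f ⊤ = Set.univ)
    (fSup : ∀ (X : Set A) (s : A), IsLUB X s → f s = ⋃ x ∈ X, f x) :
    IsAtomic A ∧ (⋃ a ∈ {x : A | IsAtom x}, f a) = Set.univ :=
  stmt3_general A V f finj finf ftop fSup
end

section
/- Let A be a Boolean algebra, V a nonempty set, and f : A → ℘(V) an injective Boolean homomorphism with f(⊤)=V. Then f is a complete representation (i.e. f preserves all existing suprema, carrying them to unions) if and only if f is an atomic representation, i.e. for every s ∈ V the set f⁻¹(s) = { a ∈ A : s ∈ f(a) } is a principal ultrafilter of A. -/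
/-!
For `t ∈ V` the set `{a | t ∈ f a}` is an ultrafilter of `A`, and `f` is complete exactly when
each of these ultrafilters is completely prime: whenever `t ∈ f (sSup X)`, already `t ∈ f a` for
some `a ∈ X`. A completely prime ultrafilter `U` contains an atom, which then generates it: the
complement of `U` has some upper bound `y ≠ ⊤` (otherwise its supremum would be `⊤ ∈ U`), and
every nonzero element below `yᶜ` lies in `U`, which forces `yᶜ` to be an atom. Conversely, if an
atom `x` generates `U` and `X` has supremum `s ∈ U`, then `x` cannot be disjoint from every
element of `X`, since otherwise `s ≤ xᶜ`.
-/

open Set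

/-- A set `U` whose indicator is a Boolean homomorphism `A → Prop`; in a Boolean algebra these are
exactly the ultrafilters. -/
structure IsBooleanUltrafilter {A : Type*} [BooleanAlgebra A] (U : Set A) : Prop where
  inf_mem_iff : ∀ a b, a ⊓ b ∈ U ↔ a ∈ U ∧ b ∈ U
  compl_mem_iff : ∀ a, aᶜ ∈ U ↔ a ∉ U

def IsCompletelyPrime {A : Type*} [Preorder A] (U : Set A) : Prop :=
  ∀ (X : Set A) (s : A), IsLUB X s → s ∈ U → ∃ a ∈ X, a ∈ U

theorem forall_isLUB_eq_biUnion_iff {A V : Type*} [Preorder A] {f : A → Set V}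
    (hf : Monotone f) :
    (∀ (X : Set A) (s : A), IsLUB X s → f s = ⋃ x ∈ X, f x) ↔
      ∀ t : V, IsCompletelyPrime {a | t ∈ f a} := by
  refine ⟨fun h t X s hs hts => ?_, fun h X s hs => ?_⟩
  · simpa [h X s hs] using hts
  · refine Subset.antisymm (fun t hts => ?_) (iUnion₂_subset fun a ha => hf (hs.1 ha))
    simpa using h t X s hs hts

theorem isBooleanUltrafilter_setOf_mem {A V : Type*} [BooleanAlgebra A] {f : A → Set V}
    (finf : ∀ a b : A, f (a ⊓ b) = f a ∩ f b) (fcompl : ∀ a : A, f aᶜ = (f a)ᶜ) (t : V) :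
    IsBooleanUltrafilter {a | t ∈ f a} :=
  ⟨fun a b => by simp [finf], fun a => by simp [fcompl]⟩

namespace IsBooleanUltrafilter

variable {A : Type*} [BooleanAlgebra A] {U : Set A}

theorem bot_notMem (hU : IsBooleanUltrafilter U) : ⊥ ∉ U := fun h =>
  (hU.compl_mem_iff ⊥).1 ((hU.inf_mem_iff ⊥ ⊥ᶜ).1 (by rwa [inf_compl_eq_bot])).2 h

theorem mem_of_le (hU : IsBooleanUltrafilter U) {a b : A} (hab : a ≤ b) (ha : a ∈ U) : b ∈ U := by
  rw [← inf_eq_left.2 hab, hU.inf_mem_iff] at ha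
  exact ha.2

theorem eq_setOf_le_of_isAtom_mem (hU : IsBooleanUltrafilter U) {x : A} (hx : IsAtom x)
    (hxU : x ∈ U) : U = {a | x ≤ a} := by
  ext a
  refine ⟨fun ha => ?_, fun hxa => hU.mem_of_le hxa hxU⟩
  by_contra hxa
  have hbot : x ⊓ a = ⊥ := disjoint_iff.1 (hx.not_le_iff_disjoint.1 hxa)
  exact hU.bot_notMem (hbot ▸ (hU.inf_mem_iff x a).2 ⟨hxU, ha⟩)

theorem isAtom_of_forall_le_mem (hU : IsBooleanUltrafilter U) {x : A} (hxU : x ∈ U)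
    (h : ∀ b ≤ x, b ≠ ⊥ → b ∈ U) : IsAtom x := by
  refine ⟨fun hx => hU.bot_notMem (hx ▸ hxU), fun b hbx => ?_⟩
  by_contra hb
  have hdiff : x \ b ≠ ⊥ := fun h0 => hbx.not_ge (sdiff_eq_bot_iff.1 h0)
  have hbc : bᶜ ∈ U := hU.mem_of_le (sdiff_eq (x := x) ▸ inf_le_right) (h _ sdiff_le hdiff)
  exact (hU.compl_mem_iff b).1 hbc (h b hbx.le hb)

theorem exists_isAtom_mem (hU : IsBooleanUltrafilter U) (hcp : IsCompletelyPrime U) :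
    ∃ x, IsAtom x ∧ x ∈ U := by
  have htop : ⊤ ∈ U := by
    rw [← compl_bot, hU.compl_mem_iff]
    exact hU.bot_notMem
  obtain ⟨y, hy, hyt⟩ : ∃ y ∈ upperBounds Uᶜ, y ≠ ⊤ := by
    by_contra! h
    obtain ⟨a, ha, haU⟩ := hcp Uᶜ ⊤ ⟨fun _ _ => le_top, fun y hy => (h y hy).ge⟩ htop
    exact ha haU
  have hyc : yᶜ ∈ U := by
    by_contra h
    exact hyt (compl_le_self.1 (hy h))
  refine ⟨yᶜ, hU.isAtom_of_forall_le_mem hyc fun b hby hb => ?_, hyc⟩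
  by_contra hbU
  exact hb (le_bot_iff.1 (inf_compl_eq_bot (a := y) ▸ le_inf (hy hbU) hby))

theorem isCompletelyPrime_of_isAtom_mem (hU : IsBooleanUltrafilter U) {x : A} (hx : IsAtom x)
    (hxU : x ∈ U) : IsCompletelyPrime U := by
  have hUx := hU.eq_setOf_le_of_isAtom_mem hx hxU
  intro X s hs hsU
  rw [hUx] at hsU ⊢
  by_contra! hX
  have hsx : s ≤ xᶜ :=
    hs.2 fun a ha => le_compl_iff_disjoint_left.2 (hx.not_le_iff_disjoint.1 (hX a ha))
  exact hx.1 (le_bot_iff.1 (inf_compl_eq_bot (a := x) ▸ le_inf le_rfl (hsU.trans hsx)))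

theorem isCompletelyPrime_iff (hU : IsBooleanUltrafilter U) :
    IsCompletelyPrime U ↔ ∃ x, IsAtom x ∧ U = {a | x ≤ a} := by
  refine ⟨fun hcp => ?_, fun ⟨x, hx, hUx⟩ => hU.isCompletelyPrime_of_isAtom_mem hx ?_⟩
  · obtain ⟨x, hx, hxU⟩ := hU.exists_isAtom_mem hcp
    exact ⟨x, hx, hU.eq_setOf_le_of_isAtom_mem hx hxU⟩
  · exact hUx ▸ le_refl x

end IsBooleanUltrafilter

theorem stmt4_general (A V : Type*) [BooleanAlgebra A]
    (f : A → Set V)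
    (finf : ∀ a b : A, f (a ⊓ b) = f a ∩ f b)
    (fcompl : ∀ a : A, f aᶜ = (f a)ᶜ) :
    (∀ (X : Set A) (s : A), IsLUB X s → f s = ⋃ x ∈ X, f x) ↔
    (∀ s : V, ∃ x : A, IsAtom x ∧ {a : A | s ∈ f a} = {a : A | x ≤ a}) := by
  have fmono : Monotone f := fun a b hab => by
    rw [← inf_eq_left.2 hab, finf]
    exact inter_subset_right
  rw [forall_isLUB_eq_biUnion_iff fmono]
  exact forall_congr' fun t => (isBooleanUltrafilter_setOf_mem finf fcompl t).isCompletelyPrime_iff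

/-- A representation `f : A → ℘(V)` (injective Boolean
homomorphism with `f ⊤ = V`, `V` nonempty) is complete (preserves all existing
suprema, carrying them to unions) iff it is atomic, i.e. for every `s ∈ V` the
ultrafilter `f⁻¹(s) = {a : s ∈ f a}` is principal, generated by an atom. -/
theorem stmt4 (A V : Type*) [BooleanAlgebra A] [Nonempty V]
    (f : A → Set V)
    (finj : Function.Injective f)
    (fsup : ∀ a b : A, f (a ⊔ b) = f a ∪ f b)
    (finf : ∀ a b : A, f (a ⊓ b) = f a ∩ f b)
    (fcompl : ∀ a : A, f aᶜ = (f a)ᶜ)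
    (ftop : f ⊤ = Set.univ) :
    (∀ (X : Set A) (s : A), IsLUB X s → f s = ⋃ x ∈ X, f x) ↔
    (∀ s : V, ∃ x : A, IsAtom x ∧ {a : A | s ∈ f a} = {a : A | x ≤ a}) :=
  stmt4_general A V f finf fcompl
end

section
/- Let n, m ∈ ℕ with n ≥ 1. Let R and R' be finite sets with |R| ≥ n·2^m and |R'| ≥ n·2^m, and let (R_S)_{S ⊆ Fin m} be a partition of R into 2^m (possibly empty) parts. Then there is a partition (R'_S)_{S ⊆ Fin m} of R' such that for every S: if |R_S| < n then |R'_S| = |R_S|, and |R'_S| ≥ n if and only if |R_S| ≥ n. -/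
/-!
Copy the sizes of the parts of `R` that are smaller than `n` and cap the others at `n`. Since
`|R| ≥ n · |ι|`, by pigeonhole some part of `R` has at least `n` elements; the capped sizes of
all the other parts add up to at most `|R'| - n`, so that part can absorb all the remaining
elements of `R'` and still has at least `n` of them.
-/

open Finset Function

section

variable {ι α β : Type*}

def IsIndexedPartition (B : Finset β) (Q : ι → Finset β) : Prop :=
  (∀ i, Q i ⊆ B) ∧ Pairwise (Disjoint on Q) ∧ ∀ x ∈ B, ∃ i, x ∈ Q i

theorem IsIndexedPartition.sum_card [Fintype ι] {B : Finset β} {Q : ι → Finset β}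
    (hQ : IsIndexedPartition B Q) : ∑ i, #(Q i) = #B := by
  classical
  obtain ⟨hsub, hdisj, hcover⟩ := hQ
  have hunion : univ.biUnion Q = B := by
    ext x
    simpa using ⟨fun ⟨i, hx⟩ => hsub i hx, hcover x⟩
  rw [← card_biUnion (hdisj.set_pairwise _), hunion]

theorem IsIndexedPartition.exists_le_card [Fintype ι] [Nonempty ι] {n : ℕ} {B : Finset β}
    {Q : ι → Finset β} (hQ : IsIndexedPartition B Q) (hB : n * Fintype.card ι ≤ #B) :
    ∃ i, n ≤ #(Q i) := by
  obtain ⟨i, -, hi⟩ := exists_le_of_sum_le (f := fun _ => n) univ_nonempty <| by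
    rw [hQ.sum_card, sum_const, card_univ, smul_eq_mul, mul_comm]
    exact hB
  exact ⟨i, hi⟩

theorem Pairwise.disjoint_update [DecidableEq ι] {Q : ι → Finset β}
    (hQ : Pairwise (Disjoint on Q)) {i : ι} {A : Finset β} (hA : ∀ j ≠ i, Disjoint A (Q j)) :
    Pairwise (Disjoint on update Q i A) := by
  intro j k hjk
  rcases eq_or_ne j i with rfl | hj
  · simpa [onFun, hjk.symm] using hA k hjk.symm
  · rcases eq_or_ne k i with rfl | hk
    · simpa [onFun, hj] using (hA j hj).symm
    · simpa [onFun, hj, hk] using hQ hjk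

theorem exists_disjoint_subsets_card_eq (t : ι → ℕ) (s : Finset ι) {B : Finset β}
    (hB : ∑ i ∈ s, t i = #B) :
    ∃ Q : ι → Finset β, (∀ i, Q i ⊆ B) ∧ Pairwise (Disjoint on Q) ∧
      (∀ x ∈ B, ∃ i ∈ s, x ∈ Q i) ∧ ∀ i ∈ s, #(Q i) = t i := by
  classical
  induction s using Finset.cons_induction generalizing B with
  | empty =>
    obtain rfl : B = ∅ := card_eq_zero.mp (by simpa using hB.symm)
    exact ⟨fun _ => ∅, fun _ => empty_subset _, fun _ _ _ => disjoint_empty_left _, by simp,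
      by simp⟩
  | cons i s hi ih =>
    rw [sum_cons] at hB
    obtain ⟨A, hAB, hA⟩ := exists_subset_card_eq (s := B) (n := t i) (by omega)
    obtain ⟨Q, hQsub, hQdisj, hQcover, hQcard⟩ :=
      ih (B := B \ A) (by rw [card_sdiff_of_subset hAB, hA]; omega)
    have hQA : ∀ j, Disjoint A (Q j) := fun j =>
      disjoint_of_subset_right (hQsub j) disjoint_sdiff
    refine ⟨update Q i A, fun j => ?_, hQdisj.disjoint_update fun j _ => hQA j,
      fun x hx => ?_, fun j hj => ?_⟩
    · rcases eq_or_ne j i with rfl | hj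
      · simpa using hAB
      · simpa [hj] using (hQsub j).trans sdiff_subset
    · by_cases hxA : x ∈ A
      · exact ⟨i, mem_cons_self i s, by simpa using hxA⟩
      · obtain ⟨j, hj, hxj⟩ := hQcover x (mem_sdiff.mpr ⟨hx, hxA⟩)
        have hji : j ≠ i := by rintro rfl; exact hi hj
        exact ⟨j, mem_cons.mpr (Or.inr hj), by simpa [hji] using hxj⟩
    · rcases eq_or_ne j i with rfl | hji
      · simpa using hA
      · simpa [hji] using hQcard j ((mem_cons.mp hj).resolve_left hji)

theorem exists_isIndexedPartition_card_eq_of_ne [Fintype ι] [DecidableEq ι] (t : ι → ℕ)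
    (i₀ : ι) {B : Finset β} (hB : ∑ i ∈ univ.erase i₀, t i ≤ #B) :
    ∃ Q : ι → Finset β, IsIndexedPartition B Q ∧ (∀ i ≠ i₀, #(Q i) = t i) ∧
      #(Q i₀) = #B - ∑ i ∈ univ.erase i₀, t i := by
  obtain ⟨Q, hsub, hdisj, hcover, hcard⟩ :=
    exists_disjoint_subsets_card_eq (B := B) (update t i₀ (#B - ∑ i ∈ univ.erase i₀, t i)) univ
      (by rw [sum_update_of_mem (mem_univ i₀), sdiff_singleton_eq_erase]; omega)
  refine ⟨Q, ⟨hsub, hdisj, fun x hx => ?_⟩, fun i hi => ?_, ?_⟩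
  · obtain ⟨i, -, hx⟩ := hcover x hx
    exact ⟨i, hx⟩
  · simpa [hi] using hcard i (mem_univ i)
  · simpa using hcard i₀ (mem_univ i₀)

theorem exists_isIndexedPartition_threshold_match [Fintype ι] [DecidableEq ι] [Nonempty ι]
    (n : ℕ) {R : Finset α} {R' : Finset β} (hR : n * Fintype.card ι ≤ #R)
    (hR' : n * Fintype.card ι ≤ #R') {P : ι → Finset α} (hP : IsIndexedPartition R P) :
    ∃ P' : ι → Finset β, IsIndexedPartition R' P' ∧
      (∀ i, #(P i) < n → #(P' i) = #(P i)) ∧ ∀ i, n ≤ #(P' i) ↔ n ≤ #(P i) := by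
  obtain ⟨i₀, hi₀⟩ := hP.exists_le_card hR
  set t : ι → ℕ := fun i => min #(P i) n
  have ht₀ : t i₀ = n := min_eq_right hi₀
  have hbound : ∑ i ∈ univ.erase i₀, t i + n ≤ #R' :=
    calc ∑ i ∈ univ.erase i₀, t i + n = ∑ i, t i := by
          rw [← sum_erase_add _ _ (mem_univ i₀), ht₀]
      _ ≤ ∑ _i : ι, n := sum_le_sum fun i _ => min_le_right _ _
      _ ≤ #R' := by rwa [sum_const, card_univ, smul_eq_mul, mul_comm]
  obtain ⟨P', hP', hcard, hcard₀⟩ :=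
    exists_isIndexedPartition_card_eq_of_ne t i₀ (B := R') (by omega)
  refine ⟨P', hP', fun i hi => ?_, fun i => ?_⟩
  · have hne : i ≠ i₀ := by rintro rfl; omega
    rw [hcard i hne]
    exact min_eq_left hi.le
  · rcases eq_or_ne i i₀ with rfl | hne
    · simp only [hcard₀, hi₀, iff_true]
      omega
    · simp only [hcard i hne, t]
      omega

end

theorem stmt9_general (n m : ℕ) (α β : Type*)
    (R : Finset α) (R' : Finset β)
    (hR : n * 2 ^ m ≤ R.card) (hR' : n * 2 ^ m ≤ R'.card)
    (P : Finset (Fin m) → Finset α)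
    (hPsub : ∀ S, P S ⊆ R)
    (hPdisj : ∀ S T, S ≠ T → Disjoint (P S) (P T))
    (hPcover : ∀ x ∈ R, ∃ S, x ∈ P S) :
    ∃ P' : Finset (Fin m) → Finset β,
      (∀ S, P' S ⊆ R') ∧
      (∀ S T, S ≠ T → Disjoint (P' S) (P' T)) ∧
      (∀ x ∈ R', ∃ S, x ∈ P' S) ∧
      (∀ S, (P S).card < n → (P' S).card = (P S).card) ∧
      (∀ S, n ≤ (P' S).card ↔ n ≤ (P S).card) := by
  have hcard : Fintype.card (Finset (Fin m)) = 2 ^ m := by simp [Fintype.card_finset]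
  obtain ⟨P', ⟨hsub, hdisj, hcover⟩, hsmall, hlarge⟩ :=
    exists_isIndexedPartition_threshold_match n (hcard ▸ hR) (hcard ▸ hR')
      ⟨hPsub, hPdisj, hPcover⟩
  exact ⟨P', hsub, fun S T => @hdisj S T, hcover, hsmall, hlarge⟩

/-- matching-partition lemma. Given `n ≥ 1`, finite sets `R, R'`
of size `≥ n·2^m`, and a partition `(P S)_{S ⊆ Fin m}` of `R`, there is a
partition `(P' S)_{S ⊆ Fin m}` of `R'` matching the sizes of the parts below
the threshold `n`, and the property of having size `≥ n`, part by part. -/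
theorem stmt9 (n m : ℕ) (hn : 1 ≤ n) (α β : Type*) [DecidableEq α] [DecidableEq β]
    (R : Finset α) (R' : Finset β)
    (hR : n * 2 ^ m ≤ R.card) (hR' : n * 2 ^ m ≤ R'.card)
    (P : Finset (Fin m) → Finset α)
    (hPsub : ∀ S, P S ⊆ R)
    (hPdisj : ∀ S T, S ≠ T → Disjoint (P S) (P T))
    (hPcover : ∀ x ∈ R, ∃ S, x ∈ P S) :
    ∃ P' : Finset (Fin m) → Finset β,
      (∀ S, P' S ⊆ R') ∧
      (∀ S T, S ≠ T → Disjoint (P' S) (P' T)) ∧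
      (∀ x ∈ R', ∃ S, x ∈ P' S) ∧
      (∀ S, (P S).card < n → (P' S).card = (P S).card) ∧
      (∀ S, n ≤ (P' S).card ↔ n ≤ (P S).card) :=
  stmt9_general n m α β R R' hR hR' P hPsub hPdisj hPcover
end

section
/- With H = η(Γ) as above (n ≥ 3), define (K,∼) ≡_i (K',∼') iff K(i)=K'(i) and the restrictions of ∼ and ∼' to Fin n \ {i} agree. Then each element of H is determined by its ≡_i-classes: if (K,∼), (K',∼') ∈ H satisfy (K,∼) ≡_i (K',∼') for every i < n, then (K,∼) = (K',∼'). Equivalently, in the complex algebra over H, {(K,∼)} = ⋂_{i<n} c_i{(K,∼)} where c_i X = { c : ∃ a ∈ X, a ≡_i c }. -/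
/-! `K` is read off pointwise from the `≡_i`. As `n ≥ 3`, any two indices `x, y` avoid a
third index `i`, and `≡_i` already fixes whether `x ∼ y`. -/

def IndepSet {V : Type*} (Γ : SimpleGraph V) (n : ℕ)
    (X : Set (V × Fin n)) : Prop :=
  ∀ p ∈ X, ∀ q ∈ X, ¬ Γ.Adj p.1 q.1

def MonkCond {V : Type*} (Γ : SimpleGraph V) (n : ℕ)
    (K : Fin n → Option (V × Fin n)) (s : Setoid (Fin n)) : Prop :=
  (Nat.card (Quotient s) = n →
      (∀ i, (K i).isSome) ∧
      ¬ IndepSet Γ n {p | ∃ i, K i = some p}) ∧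
  (Nat.card (Quotient s) = n - 1 →
      ∃ i j : Fin n, i ≠ j ∧ s.r i j ∧
        (∀ x, (K x).isSome ↔ (x = i ∨ x = j)) ∧ K i = K j) ∧
  (Nat.card (Quotient s) ≤ n - 2 → ∀ i, K i = none)

/-- The atom structure `η(Γ)` as a type. -/
def EtaGamma {V : Type*} (Γ : SimpleGraph V) (n : ℕ) :=
  {p : (Fin n → Option (V × Fin n)) × Setoid (Fin n) // MonkCond Γ n p.1 p.2}

/-- `(K,∼) ≡_i (K',∼')` iff `K i = K' i` and the restrictions of `∼`, `∼'` to
`Fin n \ {i}` agree. -/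
def EqI {V : Type*} (Γ : SimpleGraph V) (n : ℕ) (i : Fin n)
    (a b : EtaGamma Γ n) : Prop :=
  a.1.1 i = b.1.1 i ∧
  ∀ x y : Fin n, x ≠ i → y ≠ i → (a.1.2.r x y ↔ b.1.2.r x y)

theorem Setoid.eq_of_forall_ne_iff {α : Type*} {s t : Setoid α}
    (havoid : ∀ x y : α, ∃ z, z ≠ x ∧ z ≠ y)
    (h : ∀ z x y : α, x ≠ z → y ≠ z → (s.r x y ↔ t.r x y)) : s = t :=
  Setoid.ext fun x y =>
    let ⟨z, hzx, hzy⟩ := havoid x y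
    h z x y hzx.symm hzy.symm

namespace EtaGamma

variable {V : Type*} {Γ : SimpleGraph V} {n : ℕ}

theorem eqI_refl (i : Fin n) (a : EtaGamma Γ n) : EqI Γ n i a a :=
  ⟨rfl, fun _ _ _ _ => Iff.rfl⟩

theorem ext_of_forall_eqI (hn : 2 < n) {a b : EtaGamma Γ n}
    (h : ∀ i : Fin n, EqI Γ n i a b) : a = b :=
  Subtype.ext <| Prod.ext (funext fun i => (h i).1) <|
    Setoid.eq_of_forall_ne_iff (fun x y => Fin.exists_ne_and_ne_of_two_lt x y hn)
      fun i => (h i).2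

end EtaGamma

/-- each element of `η(Γ)` is determined by its `≡_i` classes;
equivalently every singleton is the intersection of its cylindrifications
`c_i{(K,∼)} = {c : ∃ a ∈ {(K,∼)}, a ≡_i c}`. -/
theorem stmt13 {V : Type*} (Γ : SimpleGraph V) (n : ℕ) (hn : 3 ≤ n) :
    (∀ a b : EtaGamma Γ n, (∀ i : Fin n, EqI Γ n i a b) → a = b) ∧
    (∀ a : EtaGamma Γ n,
      ({a} : Set (EtaGamma Γ n)) =
        ⋂ i : Fin n, {c : EtaGamma Γ n | ∃ x ∈ ({a} : Set (EtaGamma Γ n)),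
          EqI Γ n i x c}) := by
  refine ⟨fun a b => EtaGamma.ext_of_forall_eqI hn, fun a => ?_⟩
  ext c
  simp only [Set.mem_iInter, Set.mem_ofPred_eq, Set.mem_singleton_iff, exists_eq_left]
  exact ⟨fun hc i => hc ▸ EtaGamma.eqI_refl i a,
    fun hc => (EtaGamma.ext_of_forall_eqI hn hc).symm⟩
end

section
/- Let U be a nonempty set, n ∈ ℕ, and f₀ ∈ ᴼᵐᵉᵍᵃU (a function ω → U). Let W = { f : ω → U : f(k) = f₀(k) for all but finitely many k }. Let B be the collection of subsets X ⊆ W such that for every j ≥ n, whenever f ∈ X and g ∈ W agree everywhere except possibly at j, then g ∈ X. Then B is a Boolean subalgebra of ℘(W), B is atomic, and its atoms are exactly the sets A_s = { g ∈ W : g↾n = s } for s ∈ ⁿU. Consequently B is isomorphic as a Boolean algebra to ℘(ⁿU). -/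
/-!
Two elements of the weak space differ in only finitely many coordinates, so changing the
coordinates `j ≥ n` one at a time shows that membership of `g ∈ W` in a set of `B` depends
only on `g↾n`. Since every `s ∈ ⁿU` is the restriction of an element of `W` (extend it by
`f₀`), the sets of `B` are exactly the sets `{g ∈ W | g↾n ∈ S}` for `S ⊆ ⁿU`, and the atoms
are those with `S` a singleton.
-/

open Function

section NeatReduct

variable {U : Type*}

def weakSpace (f₀ : ℕ → U) : Set (ℕ → U) := {f | {k | f k ≠ f₀ k}.Finite}

/-- The subsets of `W` fixed by the cylindrifications `c_j`, `j ≥ n`. -/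
def IsNeat (W : Set (ℕ → U)) (n : ℕ) (X : Set (ℕ → U)) : Prop :=
  X ⊆ W ∧ ∀ j : ℕ, n ≤ j → ∀ f ∈ X, ∀ g ∈ W, (∀ k : ℕ, k ≠ j → g k = f k) → g ∈ X

def fiber (W : Set (ℕ → U)) (n : ℕ) (s : Fin n → U) : Set (ℕ → U) :=
  {g | g ∈ W ∧ ∀ i : Fin n, g i = s i}

def extendBy (f₀ : ℕ → U) {n : ℕ} (s : Fin n → U) (k : ℕ) : U :=
  if h : k < n then s ⟨k, h⟩ else f₀ k

section weakSpace

variable {f₀ f g : ℕ → U}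

lemma finite_ne_of_mem_weakSpace (hf : f ∈ weakSpace f₀) (hg : g ∈ weakSpace f₀) :
    {k | g k ≠ f k}.Finite :=
  (hg.union hf).subset fun k hk => by
    by_contra h
    exact hk ((not_not.1 fun h' => h (.inl h')).trans (not_not.1 fun h' => h (.inr h')).symm)

lemma update_mem_weakSpace (hf : f ∈ weakSpace f₀) (j : ℕ) (a : U) :
    update f j a ∈ weakSpace f₀ :=
  (hf.insert j).subset fun k hk => by
    rcases eq_or_ne k j with rfl | hkj
    · exact Set.mem_insert _ _
    · exact Set.mem_insert_of_mem _ (by simpa [update_of_ne hkj] using hk)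

lemma extendBy_mem_weakSpace {n : ℕ} (s : Fin n → U) : extendBy f₀ s ∈ weakSpace f₀ :=
  (Set.finite_Iio n).subset fun k hk => by
    by_contra h
    exact hk (dif_neg h)

@[simp]
lemma extendBy_apply_fin {n : ℕ} (s : Fin n → U) (i : Fin n) : extendBy f₀ s i = s i := by
  simp [extendBy]

end weakSpace

namespace IsNeat

variable {W : Set (ℕ → U)} {n : ℕ} {X Y : Set (ℕ → U)}

lemma empty : IsNeat W n ∅ :=
  ⟨Set.empty_subset W, fun _ _ _ hf => hf.elim⟩

lemma self : IsNeat W n W :=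
  ⟨subset_rfl, fun _ _ _ _ _ hg _ => hg⟩

lemma union (hX : IsNeat W n X) (hY : IsNeat W n Y) : IsNeat W n (X ∪ Y) :=
  ⟨Set.union_subset hX.1 hY.1, fun j hj f hf g hg hgf =>
    hf.imp (fun hf => hX.2 j hj f hf g hg hgf) (fun hf => hY.2 j hj f hf g hg hgf)⟩

lemma inter (hX : IsNeat W n X) (hY : IsNeat W n Y) : IsNeat W n (X ∩ Y) :=
  ⟨Set.inter_subset_left.trans hX.1, fun j hj f hf g hg hgf =>
    ⟨hX.2 j hj f hf.1 g hg hgf, hY.2 j hj f hf.2 g hg hgf⟩⟩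

lemma compl (hX : IsNeat W n X) : IsNeat W n (W \ X) :=
  ⟨Set.sdiff_subset, fun j hj f hf g hg hgf =>
    ⟨hg, fun hgX => hf.2 (hX.2 j hj g hgX f hf.1 fun k hk => (hgf k hk).symm)⟩⟩

variable {f₀ : ℕ → U}

lemma mem_of_eq_off_finset (hX : IsNeat (weakSpace f₀) n X) {g : ℕ → U}
    (s : Finset ℕ) (hs : ∀ k ∈ s, n ≤ k) :
    ∀ f ∈ X, (∀ k ∉ s, g k = f k) → g ∈ X := by
  induction s using Finset.induction_on with
  | empty =>
    intro f hf hgf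
    rwa [funext fun k => hgf k (Finset.notMem_empty k)]
  | insert j s _ ih =>
    intro f hf hgf
    have hupdate : update f j (g j) ∈ X :=
      hX.2 j (hs j (Finset.mem_insert_self j s)) f hf _ (update_mem_weakSpace (hX.1 hf) j _)
        fun k hk => update_of_ne hk _ _
    refine ih (fun k hk => hs k (Finset.mem_insert_of_mem hk)) _ hupdate fun k hk => ?_
    rcases eq_or_ne k j with rfl | hkj
    · simp
    · rw [update_of_ne hkj]
      exact hgf k (by simp [hkj, hk])

lemma mem_of_restrict_eq (hX : IsNeat (weakSpace f₀) n X) {f g : ℕ → U} (hf : f ∈ X)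
    (hg : g ∈ weakSpace f₀) (hgf : ∀ i : Fin n, g i = f i) : g ∈ X := by
  have hfin := finite_ne_of_mem_weakSpace (hX.1 hf) hg
  refine hX.mem_of_eq_off_finset hfin.toFinset (fun k hk => ?_) f hf fun k hk => ?_
  · by_contra hkn
    exact (hfin.mem_toFinset.1 hk) (hgf ⟨k, not_le.1 hkn⟩)
  · simpa using hk

lemma mem_iff_extendBy_mem (hX : IsNeat (weakSpace f₀) n X) {g : ℕ → U}
    (hg : g ∈ weakSpace f₀) : g ∈ X ↔ extendBy f₀ (fun i : Fin n => g i) ∈ X :=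
  ⟨fun h => hX.mem_of_restrict_eq h (extendBy_mem_weakSpace _) (by simp),
    fun h => hX.mem_of_restrict_eq h hg (by simp)⟩

lemma fiber_subset (hX : IsNeat (weakSpace f₀) n X) {g : ℕ → U} (hg : g ∈ X) :
    fiber (weakSpace f₀) n (fun i => g i) ⊆ X :=
  fun _ h => hX.mem_of_restrict_eq hg h.1 h.2

end IsNeat

section fiber

variable {f₀ : ℕ → U} {n : ℕ}

lemma isNeat_fiber {W : Set (ℕ → U)} (s : Fin n → U) : IsNeat W n (fiber W n s) :=
  ⟨fun _ h => h.1, fun j hj f hf g hg hgf =>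
    ⟨hg, fun i => (hgf i (by omega)).trans (hf.2 i)⟩⟩

lemma extendBy_mem_fiber (s : Fin n → U) : extendBy f₀ s ∈ fiber (weakSpace f₀) n s :=
  ⟨extendBy_mem_weakSpace s, extendBy_apply_fin s⟩

lemma fiber_ne_empty (s : Fin n → U) : fiber (weakSpace f₀) n s ≠ ∅ :=
  Set.nonempty_iff_ne_empty.1 ⟨_, extendBy_mem_fiber s⟩

lemma IsNeat.eq_empty_or_eq_fiber {Y : Set (ℕ → U)} (hY : IsNeat (weakSpace f₀) n Y)
    {s : Fin n → U} (hYs : Y ⊆ fiber (weakSpace f₀) n s) :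
    Y = ∅ ∨ Y = fiber (weakSpace f₀) n s := by
  refine Y.eq_empty_or_nonempty.imp id fun ⟨g, hg⟩ => hYs.antisymm ?_
  have hgs : (fun i : Fin n => g i) = s := funext (hYs hg).2
  exact hgs ▸ hY.fiber_subset hg

lemma IsNeat.isMinimal_iff_eq_fiber {X : Set (ℕ → U)} (hX : IsNeat (weakSpace f₀) n X) :
    (X ≠ ∅ ∧ ∀ Y, IsNeat (weakSpace f₀) n Y → Y ⊆ X → Y = ∅ ∨ Y = X) ↔
      ∃ s, X = fiber (weakSpace f₀) n s := by
  constructor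
  · rintro ⟨hne, hmin⟩
    obtain ⟨g, hg⟩ := Set.nonempty_iff_ne_empty.2 hne
    refine ⟨fun i => g i, ?_⟩
    exact ((hmin _ (isNeat_fiber _) (hX.fiber_subset hg)).resolve_left (fiber_ne_empty _)).symm
  · rintro ⟨s, rfl⟩
    exact ⟨fiber_ne_empty s, fun Y hY hYs => hY.eq_empty_or_eq_fiber hYs⟩

end fiber

def neatOrderIso (f₀ : ℕ → U) (n : ℕ) :
    {X : Set (ℕ → U) // IsNeat (weakSpace f₀) n X} ≃o Set (Fin n → U) where
  toFun X := {s | extendBy f₀ s ∈ X.1}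
  invFun S := ⟨{g | g ∈ weakSpace f₀ ∧ (fun i : Fin n => g i) ∈ S}, fun _ h => h.1,
    fun j hj f hf g hg hgf => ⟨hg, by
      rw [show (fun i : Fin n => g i) = fun i : Fin n => f i from funext fun i => hgf i (by omega)]
      exact hf.2⟩⟩
  left_inv X := Subtype.ext <| Set.ext fun g =>
    ⟨fun h => (X.2.mem_iff_extendBy_mem h.1).2 h.2,
      fun h => ⟨X.2.1 h, (X.2.mem_iff_extendBy_mem (X.2.1 h)).1 h⟩⟩
  right_inv S := Set.ext fun s => by
    simp [extendBy_mem_weakSpace]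
  map_rel_iff' {X Y} :=
    ⟨fun h g hg => (Y.2.mem_iff_extendBy_mem (X.2.1 hg)).2
      (h ((X.2.mem_iff_extendBy_mem (X.2.1 hg)).1 hg)), fun h _ hs => h hs⟩

end NeatReduct

theorem stmt14_general (U : Type*) (n : ℕ) (f₀ : ℕ → U)
    (W : Set (ℕ → U))
    (hW : W = {f : ℕ → U | {k : ℕ | f k ≠ f₀ k}.Finite})
    (B : Set (Set (ℕ → U)))
    (hB : B = {X : Set (ℕ → U) | X ⊆ W ∧ ∀ j : ℕ, n ≤ j →
        ∀ f ∈ X, ∀ g ∈ W, (∀ k : ℕ, k ≠ j → g k = f k) → g ∈ X}) :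
    (∅ ∈ B) ∧ (W ∈ B) ∧
    (∀ X ∈ B, ∀ Y ∈ B, X ∪ Y ∈ B) ∧
    (∀ X ∈ B, ∀ Y ∈ B, X ∩ Y ∈ B) ∧
    (∀ X ∈ B, W \ X ∈ B) ∧
    -- atoms of B are exactly the sets {g ∈ W : g↾n = s}
    (∀ X ∈ B, ((X ≠ ∅ ∧ ∀ Y ∈ B, Y ⊆ X → Y = ∅ ∨ Y = X) ↔
      ∃ s : Fin n → U, X = {g : ℕ → U | g ∈ W ∧ ∀ i : Fin n, g i = s i})) ∧
    -- B is atomic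
    (∀ X ∈ B, X ≠ ∅ →
      ∃ Y ∈ B, Y ⊆ X ∧ Y ≠ ∅ ∧ ∀ Z ∈ B, Z ⊆ Y → Z = ∅ ∨ Z = Y) ∧
    -- B is isomorphic (as a Boolean algebra, via an order isomorphism)
    -- to the powerset of ⁿU
    (∃ e : {X : Set (ℕ → U) // X ∈ B} ≃ Set (Fin n → U),
      ∀ X Y : {X : Set (ℕ → U) // X ∈ B}, X.1 ⊆ Y.1 ↔ e X ⊆ e Y) := by
  change W = weakSpace f₀ at hW
  subst hW
  change B = {X | IsNeat (weakSpace f₀) n X} at hB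
  subst hB
  refine ⟨IsNeat.empty, IsNeat.self, fun X hX Y hY => hX.union hY,
    fun X hX Y hY => hX.inter hY, fun X hX => hX.compl,
    fun X hX => hX.isMinimal_iff_eq_fiber, fun X hX hne => ?_,
    ⟨(neatOrderIso f₀ n).toEquiv, fun X Y => (neatOrderIso f₀ n).le_iff_le.symm⟩⟩
  obtain ⟨g, hg⟩ := Set.nonempty_iff_ne_empty.2 hne
  exact ⟨_, isNeat_fiber _, hX.fiber_subset hg, fiber_ne_empty _,
    ((isNeat_fiber (fun i : Fin n => g i)).isMinimal_iff_eq_fiber).2 ⟨_, rfl⟩ |>.2⟩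

/-- Let `W` be the weak space determined by `f₀ : ω → U`, and let
`B` consist of the subsets of `W` invariant under changing a coordinate
`j ≥ n`. Then `B` is a Boolean subalgebra of `℘(W)`, `B` is atomic, its atoms
are exactly the sets `{g ∈ W : g↾n = s}` for `s ∈ ⁿU`, and `B` is isomorphic
as a Boolean algebra (via an order isomorphism) to `℘(ⁿU)`. -/
theorem stmt14 (U : Type*) [Nonempty U] (n : ℕ) (f₀ : ℕ → U)
    (W : Set (ℕ → U))
    (hW : W = {f : ℕ → U | {k : ℕ | f k ≠ f₀ k}.Finite})
    (B : Set (Set (ℕ → U)))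
    (hB : B = {X : Set (ℕ → U) | X ⊆ W ∧ ∀ j : ℕ, n ≤ j →
        ∀ f ∈ X, ∀ g ∈ W, (∀ k : ℕ, k ≠ j → g k = f k) → g ∈ X}) :
    (∅ ∈ B) ∧ (W ∈ B) ∧
    (∀ X ∈ B, ∀ Y ∈ B, X ∪ Y ∈ B) ∧
    (∀ X ∈ B, ∀ Y ∈ B, X ∩ Y ∈ B) ∧
    (∀ X ∈ B, W \ X ∈ B) ∧
    -- atoms of B are exactly the sets {g ∈ W : g↾n = s}
    (∀ X ∈ B, ((X ≠ ∅ ∧ ∀ Y ∈ B, Y ⊆ X → Y = ∅ ∨ Y = X) ↔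
      ∃ s : Fin n → U, X = {g : ℕ → U | g ∈ W ∧ ∀ i : Fin n, g i = s i})) ∧
    -- B is atomic
    (∀ X ∈ B, X ≠ ∅ →
      ∃ Y ∈ B, Y ⊆ X ∧ Y ≠ ∅ ∧ ∀ Z ∈ B, Z ⊆ Y → Z = ∅ ∨ Z = Y) ∧
    -- B is isomorphic (as a Boolean algebra, via an order isomorphism)
    -- to the powerset of ⁿU
    (∃ e : {X : Set (ℕ → U) // X ∈ B} ≃ Set (Fin n → U),
      ∀ X Y : {X : Set (ℕ → U) // X ∈ B}, X.1 ⊆ Y.1 ↔ e X ⊆ e Y) :=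
  stmt14_general U n f₀ W hW B hB
end

section
/- Let k ≥ 1 and let f : S → ℕ be a strictly increasing function on a finite subset S of a linear order, such that f(s) ≥ 3^k for all s ∈ S and |f(s) − f(t)| ≥ 3^k for all distinct s, t ∈ S. Then for any x in the linear order with x ∉ S, there is a strictly increasing extension f' : S ∪ {x} → ℕ of f such that f'(s) ≥ 3^{k−1} for all s and |f'(s) − f'(t)| ≥ 3^{k−1} for all distinct s, t ∈ S ∪ {x}. -/
/-!
Write `d = 3^(k-1)`, so the old spacing is `3d ≥ 2d`. Put the new value just `d` above the
largest value taken below `x` (or at `d` if there is none). Every value taken above `x` is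
at least `2d` above that largest value (or at least `2d` outright), so `d` room remains on
both sides.
-/

/-- For `0 < d`: strictly increasing on `S`, with values and pairwise gaps at least `d`, stated
without casts to `ℤ`. -/
def IsSpacedOn {α : Type*} [LinearOrder α] (f : α → ℕ) (S : Finset α) (d : ℕ) : Prop :=
  (∀ s ∈ S, d ≤ f s) ∧ ∀ s ∈ S, ∀ t ∈ S, s < t → f s + d ≤ f t

namespace IsSpacedOn

variable {α : Type*} [LinearOrder α] {f : α → ℕ} {S : Finset α} {d : ℕ}

theorem mono {d' : ℕ} (h : IsSpacedOn f S d) (hd : d' ≤ d) : IsSpacedOn f S d' :=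
  ⟨fun s hs => hd.trans (h.1 s hs), fun s hs t ht hst => by have := h.2 s hs t ht hst; omega⟩

theorem congr {g : α → ℕ} (h : IsSpacedOn f S d) (hg : ∀ s ∈ S, g s = f s) :
    IsSpacedOn g S d :=
  ⟨fun s hs => hg s hs ▸ h.1 s hs, fun s hs t ht hst => hg s hs ▸ hg t ht ▸ h.2 s hs t ht hst⟩

theorem of_le_abs_sub (hmono : ∀ s ∈ S, ∀ t ∈ S, s < t → f s < f t) (hbig : ∀ s ∈ S, d ≤ f s)
    (hgap : ∀ s ∈ S, ∀ t ∈ S, s ≠ t → (d : ℤ) ≤ |(f s : ℤ) - (f t : ℤ)|) :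
    IsSpacedOn f S d := by
  refine ⟨hbig, fun s hs t ht hst => ?_⟩
  have hlt := hmono s hs t ht hst
  have hgap := hgap s hs t ht hst.ne
  rw [abs_sub_comm, abs_of_nonneg (by omega)] at hgap
  omega

theorem lt (h : IsSpacedOn f S d) (hd : 0 < d) {s t : α} (hs : s ∈ S) (ht : t ∈ S)
    (hst : s < t) : f s < f t := by
  have := h.2 s hs t ht hst
  omega

theorem le_abs_sub (h : IsSpacedOn f S d) {s t : α} (hs : s ∈ S) (ht : t ∈ S) (hst : s ≠ t) :
    (d : ℤ) ≤ |(f s : ℤ) - (f t : ℤ)| := by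
  rcases hst.lt_or_gt with hst | hst
  · have := h.2 s hs t ht hst
    rw [abs_sub_comm, abs_of_nonneg (by omega)]
    omega
  · have := h.2 t ht s hs hst
    rw [abs_of_nonneg (by omega)]
    omega

theorem insert_of_le [DecidableEq α] {x : α} (h : IsSpacedOn f S d) (hx : d ≤ f x)
    (hbelow : ∀ l ∈ S, l < x → f l + d ≤ f x) (habove : ∀ u ∈ S, x < u → f x + d ≤ f u) :
    IsSpacedOn f (insert x S) d := by
  refine ⟨(Finset.forall_mem_insert _ _ _).2 ⟨hx, h.1⟩, fun s hs t ht hst => ?_⟩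
  rcases Finset.mem_insert.1 hs with rfl | hsS <;> rcases Finset.mem_insert.1 ht with rfl | htS
  · exact absurd hst (lt_irrefl _)
  · exact habove t htS hst
  · exact hbelow s hsS hst
  · exact h.2 s hsS t htS hst

theorem exists_value (h : IsSpacedOn f S (2 * d)) (x : α) :
    ∃ v, d ≤ v ∧ (∀ l ∈ S, l < x → f l + d ≤ v) ∧ (∀ u ∈ S, x < u → v + d ≤ f u) := by
  refine ⟨d ⊔ (S.filter (· < x)).sup (f · + d), le_sup_left,
    fun l hl hlx => le_sup_of_le_right (Finset.le_sup (f := (f · + d))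
      (Finset.mem_filter.2 ⟨hl, hlx⟩)), fun u hu hxu => ?_⟩
  have hdu := h.1 u hu
  suffices d ⊔ (S.filter (· < x)).sup (f · + d) ≤ f u - d by omega
  refine sup_le (by omega) (Finset.sup_le fun l hl => ?_)
  obtain ⟨hl, hlx⟩ := Finset.mem_filter.1 hl
  have := h.2 l hl u hu (hlx.trans hxu)
  omega

theorem exists_update [DecidableEq α] (h : IsSpacedOn f S (2 * d)) {x : α} (hx : x ∉ S) :
    ∃ v, IsSpacedOn (Function.update f x v) (insert x S) d := by
  obtain ⟨v, hv, hbelow, habove⟩ := h.exists_value x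
  have hfS : ∀ s ∈ S, Function.update f x v s = f s :=
    fun s hs => Function.update_of_ne (ne_of_mem_of_not_mem hs hx) _ _
  refine ⟨v, ((h.mono (by omega)).congr hfS).insert_of_le ?_ ?_ ?_⟩
  · simpa using hv
  · intro l hl hlx
    simpa [hfS l hl] using hbelow l hl hlx
  · intro u hu hxu
    simpa [hfS u hu] using habove u hu hxu

end IsSpacedOn

/-- widely-spaced-range maintenance lemma. If `f` is strictly
increasing on a finite set `S` in a linear order, with all values `≥ 3^k` and
pairwise gaps `≥ 3^k` (`k ≥ 1`), then for any `x ∉ S` there is a strictly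
increasing extension `f'` to `S ∪ {x}` with all values `≥ 3^(k-1)` and
pairwise gaps `≥ 3^(k-1)`. -/
theorem stmt18 (k : ℕ) (hk : 1 ≤ k) (α : Type*) [LinearOrder α]
    [DecidableEq α] (S : Finset α) (f : α → ℕ)
    (hmono : ∀ s ∈ S, ∀ t ∈ S, s < t → f s < f t)
    (hbig : ∀ s ∈ S, 3 ^ k ≤ f s)
    (hgap : ∀ s ∈ S, ∀ t ∈ S, s ≠ t → (3 : ℤ) ^ k ≤ |(f s : ℤ) - (f t : ℤ)|)
    (x : α) (hx : x ∉ S) :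
    ∃ f' : α → ℕ,
      (∀ s ∈ S, f' s = f s) ∧
      (∀ s ∈ insert x S, ∀ t ∈ insert x S, s < t → f' s < f' t) ∧
      (∀ s ∈ insert x S, 3 ^ (k - 1) ≤ f' s) ∧
      (∀ s ∈ insert x S, ∀ t ∈ insert x S, s ≠ t →
        (3 : ℤ) ^ (k - 1) ≤ |(f' s : ℤ) - (f' t : ℤ)|) := by
  have hspaced : IsSpacedOn f S (3 ^ k) :=
    .of_le_abs_sub hmono hbig (by exact_mod_cast hgap)
  have hpow : 2 * 3 ^ (k - 1) ≤ 3 ^ k := by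
    obtain ⟨j, rfl⟩ := Nat.exists_eq_add_of_le' hk
    rw [Nat.add_sub_cancel, pow_succ]
    omega
  obtain ⟨v, hv⟩ := (hspaced.mono hpow).exists_update hx
  refine ⟨Function.update f x v,
    fun s hs => Function.update_of_ne (ne_of_mem_of_not_mem hs hx) _ _,
    fun s hs t ht hst => hv.lt (by positivity) hs ht hst, hv.1,
    fun s hs t ht hst => ?_⟩
  exact_mod_cast hv.le_abs_sub hs ht hst
end
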